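/- Let R be a head-finite ring and let ε ∈ R. Then there exists β ∈ R such that 1 + ε + ε²·β is a unit of R. -/

import Mathlib

/-- The head `R/J(R)` of a ring `R`: the quotient of `R` by its Jacobson radical
(the intersection of all maximal left ideals, which is a two-sided ideal). -/
abbrev RingHead (R : Type*) [Ring R] : Type _ :=
  (TwoSidedIdeal.jacobson (⊥ : TwoSidedIdeal R)).ringCon.Quotient

/-- A ring `R` is *head-finite* if its head `R/J(R)` is a semisimple ring and, for every
simple `R/J(R)`-module `M`, the division ring `End_{R/J(R)}(M)` is finite-dimensional over
its center.  (By Artin–Wedderburn, this says exactly that in the Wedderburn decomposition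
`R/J(R) ≅ ∏ Mat_{k i}(D i)`, each skew field `D i` is finite-dimensional over its center.) -/
def IsHeadFinite (R : Type u) [Ring R] : Prop :=
  IsSemisimpleRing (RingHead R) ∧
    ∀ (M : Type u) (_ : AddCommGroup M) (_ : Module (RingHead R) M),
      IsSimpleModule (RingHead R) M →
        Module.Finite (Subring.center (Module.End (RingHead R) M))
          (Module.End (RingHead R) M)

/-!
Units lift along `R → R/J(R)`, so it suffices to work in the head, which is semisimple and hence
artinian and noetherian. For an element `a` of such a ring, the Fitting decomposition of right
multiplication by `a` yields an idempotent `p` commuting with `a` such that `a` is invertible on the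
corner `p` and nilpotent on the corner `1 - p`. If `b` is the inverse of `a` in the corner `p` (the
Drazin inverse of `a`), then `a - a²b = a(1 - p)` is nilpotent, so `1 + a - a²b` is a unit.
-/

theorem IsIdempotentElem.exists_commute_sub_sq_mul_eq_mul_one_sub {A : Type*} [Ring A] {a p : A}
    (hp : IsIdempotentElem p) (hap : Commute a p) (hu : IsUnit (a * p + (1 - p))) :
    ∃ b, Commute a b ∧ a - a ^ 2 * b = a * (1 - p) := by
  -- `u` acts as `a` on the corner `p` and as the identity on `1 - p`, so `u⁻¹ * p` inverts `a` there.
  set u := hu.unit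
  have hau : Commute a u := by
    rw [hu.unit_spec]
    exact ((Commute.refl a).mul_right hap).add_right ((Commute.one_right a).sub_right hap)
  have hup : u * p = a * p := by
    rw [hu.unit_spec, add_mul, sub_mul, one_mul, mul_assoc, hp.eq, sub_self, add_zero]
  have hab : a * (↑u⁻¹ * p) = p := by
    rw [← mul_assoc, hau.units_inv_right.eq, mul_assoc, ← hup, ← mul_assoc, u.inv_mul, one_mul]
  refine ⟨↑u⁻¹ * p, hau.units_inv_right.mul_right hap, ?_⟩
  rw [sq, mul_assoc, hab, mul_sub, mul_one]

namespace Module.End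

variable {R M : Type*} [Ring R] [AddCommGroup M] [Module R M]

theorem ker_mem_invtSubmodule_of_commute {f g : Module.End R M} (h : Commute f g) :
    LinearMap.ker g ∈ f.invtSubmodule := by
  intro x hx
  simp only [Submodule.mem_comap, LinearMap.mem_ker] at hx ⊢
  rw [← mul_apply, ← h.eq, mul_apply, hx, map_zero]

theorem range_mem_invtSubmodule_of_commute {f g : Module.End R M} (h : Commute f g) :
    LinearMap.range g ∈ f.invtSubmodule := by
  rintro _ ⟨y, rfl⟩
  exact ⟨f y, by rw [← mul_apply, ← h.eq, mul_apply]⟩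

theorem exists_isIdempotentElem_commute_isUnit_isNilpotent [IsArtinian R M] [IsNoetherian R M]
    (f : Module.End R M) : ∃ p : Module.End R M, IsIdempotentElem p ∧ Commute f p ∧
      IsUnit (f * p + (1 - p)) ∧ IsNilpotent (f * (1 - p)) := by
  obtain ⟨n, hn⟩ := Filter.eventually_atTop.mp f.eventually_isCompl_ker_pow_range_pow
  have hc := hn (n + 1) n.le_succ
  set K := LinearMap.ker (f ^ (n + 1))
  set W := LinearMap.range (f ^ (n + 1))
  set p := W.projection K hc.symm
  have hp : IsIdempotentElem p := Submodule.isIdempotentElem_projection _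
  have hfp : Commute f p := by
    refine ((LinearMap.IsIdempotentElem.commute_iff hp).mpr ⟨?_, ?_⟩).symm
    · rw [Submodule.range_projection]
      exact range_mem_invtSubmodule_of_commute (Commute.self_pow f _)
    · rw [Submodule.ker_projection]
      exact ker_mem_invtSubmodule_of_commute (Commute.self_pow f _)
  have hK (x : M) : x - p x ∈ K := Submodule.sub_projection_mem hc.symm x
  have hW (x : M) : p x ∈ W := Submodule.projection_apply_mem hc.symm x
  refine ⟨p, hp, hfp, ?_, ⟨n + 1, ?_⟩⟩
  · rw [isUnit_iff]
    refine IsArtinian.bijective_of_injective_endomorphism _ ((injective_iff_map_eq_zero _).mpr ?_)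
    intro x hx
    replace hx : f (p x) = -(x - p x) := eq_neg_of_add_eq_zero_left hx
    have hfpx : f (p x) = 0 := Submodule.disjoint_def.mp hc.disjoint _
      (hx ▸ K.neg_mem (hK x)) (range_mem_invtSubmodule_of_commute (Commute.self_pow f _) (hW x))
    have hpx : p x = 0 := Submodule.disjoint_def.mp hc.disjoint _
      (by rw [LinearMap.mem_ker, pow_succ, mul_apply, hfpx, map_zero]) (hW x)
    rwa [hpx, map_zero, sub_zero, eq_comm, neg_eq_zero] at hx
  · rw [((Commute.one_right f).sub_right hfp).mul_pow, hp.one_sub.pow_succ_eq]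
    ext x
    exact hK x

theorem exists_commute_isNilpotent_sub_sq_mul [IsArtinian R M] [IsNoetherian R M]
    (f : Module.End R M) : ∃ g, Commute f g ∧ IsNilpotent (f - f ^ 2 * g) := by
  obtain ⟨p, hp, hfp, hu, hnil⟩ := exists_isIdempotentElem_commute_isUnit_isNilpotent f
  obtain ⟨g, hfg, hg⟩ := hp.exists_commute_sub_sq_mul_eq_mul_one_sub hfp hu
  exact ⟨g, hfg, hg ▸ hnil⟩

end Module.End

namespace TwoSidedIdeal

variable {R : Type*} [Ring R] {x : R}

theorem exists_mul_one_add_eq_one_of_mem_jacobson_bot (hx : x ∈ jacobson (⊥ : TwoSidedIdeal R)) :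
    ∃ y ∈ jacobson (⊥ : TwoSidedIdeal R), (1 + y) * (1 + x) = 1 := by
  obtain ⟨z, hz⟩ := mem_jacobson_iff.mp hx 1
  rw [mem_bot, mul_one, sub_eq_zero] at hz
  have hz' : 1 + -(z * x) = z := by rw [← hz]; abel
  refine ⟨-(z * x), neg_mem _ (mul_mem_left _ _ _ hx), ?_⟩
  rw [hz', mul_add, mul_one, add_comm, hz]

theorem isUnit_one_add_of_mem_jacobson_bot (hx : x ∈ jacobson (⊥ : TwoSidedIdeal R)) :
    IsUnit (1 + x) := by
  obtain ⟨y, hy, hyx⟩ := exists_mul_one_add_eq_one_of_mem_jacobson_bot hx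
  obtain ⟨z, -, hzy⟩ := exists_mul_one_add_eq_one_of_mem_jacobson_bot hy
  have hzx : 1 + z = 1 + x := left_inv_eq_right_inv hzy hyx
  exact isUnit_iff_exists.mpr ⟨1 + y, hzx ▸ hzy, hyx⟩

theorem isUnit_of_mk'_jacobson_bot_eq_one {y : R}
    (hy : (jacobson (⊥ : TwoSidedIdeal R)).ringCon.mk' y = 1) : IsUnit y := by
  have hy' : y - 1 ∈ jacobson (⊥ : TwoSidedIdeal R) := by
    rw [← ker_ringCon_mk' (jacobson ⊥), mem_ker, map_sub, hy, map_one, sub_self]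
  simpa using isUnit_one_add_of_mem_jacobson_bot hy'

instance : IsLocalHom (jacobson (⊥ : TwoSidedIdeal R)).ringCon.mk' where
  map_nonunit x hx := by
    obtain ⟨v, hv⟩ := RingCon.mk'_surjective _ (↑hx.unit⁻¹ : RingHead R)
    obtain ⟨l, hl⟩ := (isUnit_of_mk'_jacobson_bot_eq_one (y := v * x)
      (by rw [map_mul, hv, IsUnit.val_inv_mul])).exists_left_inv
    obtain ⟨r, hr⟩ := (isUnit_of_mk'_jacobson_bot_eq_one (y := x * v)
      (by rw [map_mul, hv, IsUnit.mul_val_inv])).exists_right_inv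
    rw [← mul_assoc] at hl
    rw [mul_assoc] at hr
    exact isUnit_iff_exists.mpr ⟨v * r, hr, left_inv_eq_right_inv hl hr ▸ hl⟩

end TwoSidedIdeal

open MulOpposite in
theorem IsArtinianRing.exists_isNilpotent_sub_sq_mul {S : Type*} [Ring S] [IsArtinianRing S]
    (a : S) : ∃ b, IsNilpotent (a - a ^ 2 * b) := by
  let e := RingEquiv.moduleEndSelf S
  obtain ⟨g, hag, hnil⟩ := Module.End.exists_commute_isNilpotent_sub_sq_mul (e (op a))
  obtain ⟨b, rfl⟩ := e.surjective g
  rw [← map_pow, ← map_mul, ← map_sub, IsNilpotent.map_iff e.injective] at hnil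
  have hab : Commute (op a) b := by simpa using hag.map e.symm
  obtain ⟨k, hk⟩ := hnil
  refine ⟨b.unop, k, op_injective ?_⟩
  rw [op_pow, op_sub, op_mul, op_unop, op_pow, ← (hab.pow_left 2).eq, hk, op_zero]

theorem IsArtinianRing.exists_isUnit_one_add_add_sq_mul {S : Type*} [Ring S] [IsArtinianRing S]
    (a : S) : ∃ b, IsUnit (1 + a + a ^ 2 * b) := by
  obtain ⟨b, hb⟩ := exists_isNilpotent_sub_sq_mul a
  exact ⟨-b, by simpa [sub_eq_add_neg, add_assoc] using hb.isUnit_one_add⟩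

/-- Let `R` be a head-finite ring and `ε ∈ R`.  Then there exists `β ∈ R` such that
`1 + ε + ε²·β` is a unit of `R`. -/
theorem exists_unit_one_add_add_sq_mul (R : Type u) [Ring R] (hR : IsHeadFinite R)
    (ε : R) : ∃ β : R, IsUnit (1 + ε + ε ^ 2 * β) := by
  have : IsSemisimpleRing (RingHead R) := hR.1
  let mk := (TwoSidedIdeal.jacobson (⊥ : TwoSidedIdeal R)).ringCon.mk'
  obtain ⟨b, hb⟩ := IsArtinianRing.exists_isUnit_one_add_add_sq_mul (mk ε)
  obtain ⟨β, rfl⟩ := RingCon.mk'_surjective _ b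
  refine ⟨β, IsUnit.of_map mk _ ?_⟩
  rw [map_add, map_add, map_one, map_mul, map_pow]
  exact hb
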